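/- arXiv:2204.03584 — 2 statements merged into one kernel-verified Lean document; each statement's English description precedes it below -/
import Mathlib

section
/- Let L be a 2×2 operator matrix function on Ω in H = H₁ ⊕ H₂. (i) W²(L) ⊆ W(L) and W²_Ψ(L) ⊆ W_Ψ(L), where W(L) := {λ ∈ Ω : ∃ x ∈ dom L(λ), ‖x‖ = 1, ⟨L(λ)x, x⟩ = 0} and W_Ψ(L) := ⋂_{ε>0} ⋃_{‖𝓑‖<ε} W(L + 𝓑). (ii) Suppose dim H₂ ≥ 2 and D₂(λ) is dense in H₂ for every λ ∈ Ω. If λ ∈ Ω with dom A(λ) ⊆ dom C(λ) and there is f ∈ dom A(λ), ‖f‖ = 1, with ⟨A(λ)f, f⟩ = 0, then λ ∈ W²(L); if λ ∈ Ω with dom A(λ) ⊆ dom C(λ) and 0 ∈ closure{⟨A(λ)f, f⟩ : f ∈ dom A(λ), ‖f‖ = 1}, then λ ∈ W²_{Ψ,2}(L) ⊆ W²_Ψ(L). -/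
open Filter Topology

noncomputable section

variable {H₁ H₂ : Type*}
  [NormedAddCommGroup H₁] [InnerProductSpace ℂ H₁] [CompleteSpace H₁]
  [NormedAddCommGroup H₂] [InnerProductSpace ℂ H₂] [CompleteSpace H₂]

local notation "⟪" x ", " y "⟫" => @inner ℂ _ _ x y

/-- First diagonal block component `𝓑₁₁ f = P₁ 𝓑 (f, 0)` of a bounded operator on
the Hilbert space direct sum `H₁ ⊕ H₂`. -/
def blk11 (𝓑 : WithLp 2 (H₁ × H₂) →L[ℂ] WithLp 2 (H₁ × H₂)) (f : H₁) : H₁ :=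
  ((WithLp.equiv 2 (H₁ × H₂)) (𝓑 ((WithLp.equiv 2 (H₁ × H₂)).symm (f, 0)))).1

/-- Block component `𝓑₂₁ f = P₂ 𝓑 (f, 0)`. -/
def blk21 (𝓑 : WithLp 2 (H₁ × H₂) →L[ℂ] WithLp 2 (H₁ × H₂)) (f : H₁) : H₂ :=
  ((WithLp.equiv 2 (H₁ × H₂)) (𝓑 ((WithLp.equiv 2 (H₁ × H₂)).symm (f, 0)))).2

/-- Block component `𝓑₁₂ g = P₁ 𝓑 (0, g)`. -/
def blk12 (𝓑 : WithLp 2 (H₁ × H₂) →L[ℂ] WithLp 2 (H₁ × H₂)) (g : H₂) : H₁ :=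
  ((WithLp.equiv 2 (H₁ × H₂)) (𝓑 ((WithLp.equiv 2 (H₁ × H₂)).symm (0, g)))).1

/-- Block component `𝓑₂₂ g = P₂ 𝓑 (0, g)`. -/
def blk22 (𝓑 : WithLp 2 (H₁ × H₂) →L[ℂ] WithLp 2 (H₁ × H₂)) (g : H₂) : H₂ :=
  ((WithLp.equiv 2 (H₁ × H₂)) (𝓑 ((WithLp.equiv 2 (H₁ × H₂)).symm (0, g)))).2

/-- The quadratic numerical range `W²(L)` of the 2×2 operator matrix function with
entries `A(λ), B(λ), C(λ), D(λ)` on `Ω`. -/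
def qnr (Ω : Set ℂ) (A : ℂ → H₁ →ₗ.[ℂ] H₁) (B : ℂ → H₂ →ₗ.[ℂ] H₁)
    (C : ℂ → H₁ →ₗ.[ℂ] H₂) (D : ℂ → H₂ →ₗ.[ℂ] H₂) : Set ℂ :=
  {l | l ∈ Ω ∧ ∃ (f : H₁) (g : H₂) (hfA : f ∈ (A l).domain) (hfC : f ∈ (C l).domain)
    (hgB : g ∈ (B l).domain) (hgD : g ∈ (D l).domain), ‖f‖ = 1 ∧ ‖g‖ = 1 ∧
    ⟪f, (A l) ⟨f, hfA⟩⟫ * ⟪g, (D l) ⟨g, hgD⟩⟫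
      - ⟪f, (B l) ⟨g, hgB⟩⟫ * ⟪g, (C l) ⟨f, hfC⟩⟫ = 0}

/-- `W²(L + 𝓑)` for a bounded perturbation `𝓑` of the whole matrix. -/
def qnrPert (Ω : Set ℂ) (A : ℂ → H₁ →ₗ.[ℂ] H₁) (B : ℂ → H₂ →ₗ.[ℂ] H₁)
    (C : ℂ → H₁ →ₗ.[ℂ] H₂) (D : ℂ → H₂ →ₗ.[ℂ] H₂)
    (𝓑 : WithLp 2 (H₁ × H₂) →L[ℂ] WithLp 2 (H₁ × H₂)) : Set ℂ :=
  {l | l ∈ Ω ∧ ∃ (f : H₁) (g : H₂) (hfA : f ∈ (A l).domain) (hfC : f ∈ (C l).domain)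
    (hgB : g ∈ (B l).domain) (hgD : g ∈ (D l).domain), ‖f‖ = 1 ∧ ‖g‖ = 1 ∧
    ⟪f, (A l) ⟨f, hfA⟩ + blk11 𝓑 f⟫ * ⟪g, (D l) ⟨g, hgD⟩ + blk22 𝓑 g⟫
      - ⟪f, (B l) ⟨g, hgB⟩ + blk12 𝓑 g⟫ * ⟪g, (C l) ⟨f, hfC⟩ + blk21 𝓑 f⟫ = 0}

/-- `W²_ε(L) = ⋃_{‖𝓑‖<ε} W²(L + 𝓑)`. -/
def qnrEps (Ω : Set ℂ) (A : ℂ → H₁ →ₗ.[ℂ] H₁) (B : ℂ → H₂ →ₗ.[ℂ] H₁)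
    (C : ℂ → H₁ →ₗ.[ℂ] H₂) (D : ℂ → H₂ →ₗ.[ℂ] H₂) (ε : ℝ) : Set ℂ :=
  ⋃ (𝓑 : WithLp 2 (H₁ × H₂) →L[ℂ] WithLp 2 (H₁ × H₂)) (_ : ‖𝓑‖ < ε),
    qnrPert Ω A B C D 𝓑

/-- The pseudo quadratic numerical range `W²_Ψ(L) = ⋂_{ε>0} W²_ε(L)`. -/
def qnrPsi (Ω : Set ℂ) (A : ℂ → H₁ →ₗ.[ℂ] H₁) (B : ℂ → H₂ →ₗ.[ℂ] H₁)
    (C : ℂ → H₁ →ₗ.[ℂ] H₂) (D : ℂ → H₂ →ₗ.[ℂ] H₂) : Set ℂ :=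
  ⋂ ε > (0 : ℝ), qnrEps Ω A B C D ε

/-- `W²(L + diag(B₁, B₂))` for bounded diagonal perturbations. -/
def qnrDiag (Ω : Set ℂ) (A : ℂ → H₁ →ₗ.[ℂ] H₁) (B : ℂ → H₂ →ₗ.[ℂ] H₁)
    (C : ℂ → H₁ →ₗ.[ℂ] H₂) (D : ℂ → H₂ →ₗ.[ℂ] H₂)
    (B₁ : H₁ →L[ℂ] H₁) (B₂ : H₂ →L[ℂ] H₂) : Set ℂ :=
  {l | l ∈ Ω ∧ ∃ (f : H₁) (g : H₂) (hfA : f ∈ (A l).domain) (hfC : f ∈ (C l).domain)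
    (hgB : g ∈ (B l).domain) (hgD : g ∈ (D l).domain), ‖f‖ = 1 ∧ ‖g‖ = 1 ∧
    ⟪f, (A l) ⟨f, hfA⟩ + B₁ f⟫ * ⟪g, (D l) ⟨g, hgD⟩ + B₂ g⟫
      - ⟪f, (B l) ⟨g, hgB⟩⟫ * ⟪g, (C l) ⟨f, hfC⟩⟫ = 0}

/-- `W²_{Ψ,2}(L) = ⋂_{ε>0} ⋃_{‖B₁‖<ε, ‖B₂‖<ε} W²(L + diag(B₁, B₂))`. -/
def qnrPsi2 (Ω : Set ℂ) (A : ℂ → H₁ →ₗ.[ℂ] H₁) (B : ℂ → H₂ →ₗ.[ℂ] H₁)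
    (C : ℂ → H₁ →ₗ.[ℂ] H₂) (D : ℂ → H₂ →ₗ.[ℂ] H₂) : Set ℂ :=
  ⋂ ε > (0 : ℝ), ⋃ (B₁ : H₁ →L[ℂ] H₁) (B₂ : H₂ →L[ℂ] H₂)
    (_ : ‖B₁‖ < ε ∧ ‖B₂‖ < ε), qnrDiag Ω A B C D B₁ B₂

/-- The numerical range `W(L + 𝓑)` of the perturbed full operator matrix function on the
Hilbert space direct sum `H = H₁ ⊕ H₂`. -/
def fullWPert (Ω : Set ℂ) (A : ℂ → H₁ →ₗ.[ℂ] H₁) (B : ℂ → H₂ →ₗ.[ℂ] H₁)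
    (C : ℂ → H₁ →ₗ.[ℂ] H₂) (D : ℂ → H₂ →ₗ.[ℂ] H₂)
    (𝓑 : WithLp 2 (H₁ × H₂) →L[ℂ] WithLp 2 (H₁ × H₂)) : Set ℂ :=
  {l | l ∈ Ω ∧ ∃ (f : H₁) (g : H₂) (hfA : f ∈ (A l).domain) (hfC : f ∈ (C l).domain)
    (hgB : g ∈ (B l).domain) (hgD : g ∈ (D l).domain),
    ‖(WithLp.equiv 2 (H₁ × H₂)).symm (f, g)‖ = 1 ∧
    ⟪(WithLp.equiv 2 (H₁ × H₂)).symm (f, g),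
      (WithLp.equiv 2 (H₁ × H₂)).symm
        ((A l) ⟨f, hfA⟩ + (B l) ⟨g, hgB⟩, (C l) ⟨f, hfC⟩ + (D l) ⟨g, hgD⟩)
      + 𝓑 ((WithLp.equiv 2 (H₁ × H₂)).symm (f, g))⟫ = 0}

/-- The numerical range `W(L)` of the full operator matrix function. -/
def fullW (Ω : Set ℂ) (A : ℂ → H₁ →ₗ.[ℂ] H₁) (B : ℂ → H₂ →ₗ.[ℂ] H₁)
    (C : ℂ → H₁ →ₗ.[ℂ] H₂) (D : ℂ → H₂ →ₗ.[ℂ] H₂) : Set ℂ :=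
  {l | l ∈ Ω ∧ ∃ (f : H₁) (g : H₂) (hfA : f ∈ (A l).domain) (hfC : f ∈ (C l).domain)
    (hgB : g ∈ (B l).domain) (hgD : g ∈ (D l).domain),
    ‖(WithLp.equiv 2 (H₁ × H₂)).symm (f, g)‖ = 1 ∧
    ⟪(WithLp.equiv 2 (H₁ × H₂)).symm (f, g),
      (WithLp.equiv 2 (H₁ × H₂)).symm
        ((A l) ⟨f, hfA⟩ + (B l) ⟨g, hgB⟩, (C l) ⟨f, hfC⟩ + (D l) ⟨g, hgD⟩)⟫ = 0}

/-- The pseudo numerical range `W_Ψ(L) = ⋂_{ε>0} ⋃_{‖𝓑‖<ε} W(L + 𝓑)` of the full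
operator matrix function. -/
def fullWPsi (Ω : Set ℂ) (A : ℂ → H₁ →ₗ.[ℂ] H₁) (B : ℂ → H₂ →ₗ.[ℂ] H₁)
    (C : ℂ → H₁ →ₗ.[ℂ] H₂) (D : ℂ → H₂ →ₗ.[ℂ] H₂) : Set ℂ :=
  ⋂ ε > (0 : ℝ), ⋃ (𝓑 : WithLp 2 (H₁ × H₂) →L[ℂ] WithLp 2 (H₁ × H₂))
    (_ : ‖𝓑‖ < ε), fullWPert Ω A B C D 𝓑

/-!
If `det L(λ)_{(f,g)} = 0`, a unit vector `(α, β)` in the kernel of `L(λ)_{(f,g)}` gives the unit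
vector `(α f, β g)` of `H₁ ⊕ H₂`, and the quadratic form of `L(λ)` (or of any bounded
perturbation of it) at that vector is `⟨L(λ)_{(f,g)} (α, β), (α, β)⟩ = 0`; this is (i).
For (ii), a dense subspace of a space of dimension at least two contains a unit vector `g`
orthogonal to `C(λ) f`, which kills the off-diagonal product in `det L(λ)_{(f,g)}`; the
determinant then vanishes together with `⟨A(λ) f, f⟩`. If this number is only small, subtracting
it times the identity from `A(λ)` is a small diagonal perturbation that makes it vanish.
-/

section UnitVectors

variable {𝕜 : Type*} [RCLike 𝕜]

theorem exists_norm_sq_add_norm_sq_eq_one_of_det_eq_zero {a b c d : 𝕜} (h : a * d - b * c = 0) :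
    ∃ α β : 𝕜, ‖α‖ ^ 2 + ‖β‖ ^ 2 = 1 ∧ a * α + b * β = 0 ∧ c * α + d * β = 0 := by
  have hdet : (!![a, b; c, d]).det = 0 := by rwa [Matrix.det_fin_two_of]
  obtain ⟨v, hv, hker⟩ := Matrix.exists_mulVec_eq_zero_iff.mpr hdet
  have hu : WithLp.toLp 2 v ≠ (0 : EuclideanSpace 𝕜 (Fin 2)) := by simpa using hv
  set r : 𝕜 := (‖WithLp.toLp 2 v‖ : 𝕜)⁻¹
  have hnorm : ‖r • WithLp.toLp 2 v‖ ^ 2 = 1 := by rw [norm_smul_inv_norm hu, one_pow]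
  rw [EuclideanSpace.norm_sq_eq, Fin.sum_univ_two] at hnorm
  have hrow₁ := congrFun hker 0
  have hrow₂ := congrFun hker 1
  simp only [Matrix.mulVec, dotProduct, Fin.sum_univ_two, Matrix.of_apply, Matrix.cons_val',
    Matrix.cons_val_zero, Matrix.cons_val_fin_one, Matrix.cons_val_one, Pi.zero_apply]
    at hrow₁ hrow₂
  refine ⟨r * v 0, r * v 1, by simpa [norm_mul] using hnorm, ?_, ?_⟩
  · linear_combination r * hrow₁
  · linear_combination r * hrow₂

variable {E : Type*} [NormedAddCommGroup E] [InnerProductSpace 𝕜 E]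

theorem Submodule.exists_ne_zero_mem_inner_eq_zero_of_dense (hE : 2 ≤ Module.rank 𝕜 E)
    {S : Submodule 𝕜 E} (hS : Dense (S : Set E)) (h : E) :
    ∃ g ∈ S, g ≠ 0 ∧ inner 𝕜 h g = 0 := by
  -- Otherwise `⟪h, ·⟫` is injective on `S`, so `S` is finite-dimensional, hence closed.
  by_contra! hS_orth
  have hinj : Function.Injective ((innerₛₗ 𝕜 h).domRestrict S) := by
    refine (injective_iff_map_eq_zero _).mpr fun g hg => ?_
    by_contra hg0
    exact hS_orth g g.2 (by simpa using hg0) hg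
  have hrank : Module.rank 𝕜 S ≤ 1 := by
    simpa using LinearMap.lift_rank_le_of_injective _ hinj
  have : FiniteDimensional 𝕜 S :=
    Module.rank_lt_aleph0_iff.mp (hrank.trans_lt Cardinal.one_lt_aleph0)
  have htop : S = ⊤ := by
    rw [← Submodule.dense_iff_topologicalClosure_eq_top.mp hS,
      S.closed_of_finiteDimensional.submodule_topologicalClosure_eq]
  rw [← rank_top, ← htop] at hE
  exact absurd (hE.trans hrank) (by norm_num)

theorem Submodule.exists_norm_eq_one_mem_inner_eq_zero_of_dense (hE : 2 ≤ Module.rank 𝕜 E)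
    {S : Submodule 𝕜 E} (hS : Dense (S : Set E)) (h : E) :
    ∃ g ∈ S, ‖g‖ = 1 ∧ inner 𝕜 g h = 0 := by
  obtain ⟨g, hgS, hg0, hgh⟩ := S.exists_ne_zero_mem_inner_eq_zero_of_dense hE hS h
  exact ⟨(‖g‖⁻¹ : 𝕜) • g, S.smul_mem _ hgS, norm_smul_inv_norm hg0,
    by rw [inner_smul_left, inner_eq_zero_symm.mp hgh, mul_zero]⟩

end UnitVectors

section BlockDiagonal

variable {𝕜 E F : Type*} [NontriviallyNormedField 𝕜] [SeminormedAddCommGroup E]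
  [NormedSpace 𝕜 E] [SeminormedAddCommGroup F] [NormedSpace 𝕜 F]

def blockDiag (T₁ : E →L[𝕜] E) (T₂ : F →L[𝕜] F) : WithLp 2 (E × F) →L[𝕜] WithLp 2 (E × F) :=
  (WithLp.prodContinuousLinearEquiv 2 𝕜 E F).symm.toContinuousLinearMap ∘L T₁.prodMap T₂ ∘L
    (WithLp.prodContinuousLinearEquiv 2 𝕜 E F).toContinuousLinearMap

@[simp]
theorem blockDiag_fst (T₁ : E →L[𝕜] E) (T₂ : F →L[𝕜] F) (x : WithLp 2 (E × F)) :
    (blockDiag T₁ T₂ x).fst = T₁ x.fst :=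
  rfl

@[simp]
theorem blockDiag_snd (T₁ : E →L[𝕜] E) (T₂ : F →L[𝕜] F) (x : WithLp 2 (E × F)) :
    (blockDiag T₁ T₂ x).snd = T₂ x.snd :=
  rfl

theorem norm_blockDiag_le (T₁ : E →L[𝕜] E) (T₂ : F →L[𝕜] F) :
    ‖blockDiag T₁ T₂‖ ≤ max ‖T₁‖ ‖T₂‖ := by
  have hM : 0 ≤ max ‖T₁‖ ‖T₂‖ := (norm_nonneg _).trans (le_max_left _ _)
  refine ContinuousLinearMap.opNorm_le_bound _ hM fun x => ?_
  rw [← sq_le_sq₀ (norm_nonneg _) (by positivity), mul_pow, WithLp.prod_norm_sq_eq_of_L2 x,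
    WithLp.prod_norm_sq_eq_of_L2, blockDiag_fst, blockDiag_snd]
  have h₁ : ‖T₁ x.fst‖ ≤ max ‖T₁‖ ‖T₂‖ * ‖x.fst‖ :=
    (T₁.le_opNorm _).trans (by gcongr; exact le_max_left _ _)
  have h₂ : ‖T₂ x.snd‖ ≤ max ‖T₁‖ ‖T₂‖ * ‖x.snd‖ :=
    (T₂.le_opNorm _).trans (by gcongr; exact le_max_right _ _)
  nlinarith [pow_le_pow_left₀ (norm_nonneg _) h₁ 2, pow_le_pow_left₀ (norm_nonneg _) h₂ 2]

end BlockDiagonal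

theorem LinearPMap.apply_smul_mk {R E F : Type*} [Ring R] [AddCommGroup E] [Module R E]
    [AddCommGroup F] [Module R F] (T : E →ₗ.[R] F) (c : R) {x : E} (hx : x ∈ T.domain)
    (hcx : c • x ∈ T.domain) : T ⟨c • x, hcx⟩ = c • T ⟨x, hx⟩ :=
  T.map_smul c ⟨x, hx⟩

section BlockOperator

variable {E₁ E₂ : Type*} [NormedAddCommGroup E₁] [InnerProductSpace ℂ E₁]
  [NormedAddCommGroup E₂] [InnerProductSpace ℂ E₂]

theorem inner_toLp_smul_prod_add_apply (𝓑 : WithLp 2 (E₁ × E₂) →L[ℂ] WithLp 2 (E₁ × E₂))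
    (f a b : E₁) (g c d : E₂) (α β : ℂ) :
    ⟪WithLp.toLp 2 (α • f, β • g),
        WithLp.toLp 2 (α • a + β • b, α • c + β • d) + 𝓑 (WithLp.toLp 2 (α • f, β • g))⟫ =
      starRingEnd ℂ α * (α * ⟪f, a + blk11 𝓑 f⟫ + β * ⟪f, b + blk12 𝓑 g⟫) +
      starRingEnd ℂ β * (α * ⟪g, c + blk21 𝓑 f⟫ + β * ⟪g, d + blk22 𝓑 g⟫) := by
  have hsplit : WithLp.toLp 2 (α • f, β • g) =
      α • WithLp.toLp 2 (f, (0 : E₂)) + β • WithLp.toLp 2 ((0 : E₁), g) := by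
    simp [← WithLp.toLp_smul, ← WithLp.toLp_add]
  rw [hsplit, map_add, map_smul, map_smul, ← hsplit, WithLp.prod_inner_apply]
  simp only [blk11, blk12, blk21, blk22, WithLp.equiv_apply, WithLp.equiv_symm_apply,
    WithLp.add_fst, WithLp.add_snd, WithLp.smul_fst, WithLp.smul_snd, WithLp.toLp_fst,
    WithLp.toLp_snd, WithLp.ofLp_fst, WithLp.ofLp_snd, inner_add_right, inner_smul_left,
    inner_smul_right]
  ring

theorem qnrPert_subset_fullWPert (Ω : Set ℂ) (A : ℂ → E₁ →ₗ.[ℂ] E₁) (B : ℂ → E₂ →ₗ.[ℂ] E₁)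
    (C : ℂ → E₁ →ₗ.[ℂ] E₂) (D : ℂ → E₂ →ₗ.[ℂ] E₂)
    (𝓑 : WithLp 2 (E₁ × E₂) →L[ℂ] WithLp 2 (E₁ × E₂)) :
    qnrPert Ω A B C D 𝓑 ⊆ fullWPert Ω A B C D 𝓑 := by
  rintro l ⟨hl, f, g, hfA, hfC, hgB, hgD, hf, hg, hdet⟩
  obtain ⟨α, β, hαβ, hrow₁, hrow₂⟩ := exists_norm_sq_add_norm_sq_eq_one_of_det_eq_zero hdet
  refine ⟨hl, α • f, β • g, (A l).domain.smul_mem α hfA, (C l).domain.smul_mem α hfC,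
    (B l).domain.smul_mem β hgB, (D l).domain.smul_mem β hgD, ?_, ?_⟩
  · rw [← sq_eq_sq₀ (norm_nonneg _) zero_le_one, WithLp.prod_norm_sq_eq_of_L2]
    simp [norm_smul, hf, hg, hαβ]
  · rw [(A l).apply_smul_mk α hfA, (B l).apply_smul_mk β hgB, (C l).apply_smul_mk α hfC,
      (D l).apply_smul_mk β hgD]
    simp only [WithLp.equiv_symm_apply, inner_toLp_smul_prod_add_apply]
    linear_combination starRingEnd ℂ α * hrow₁ + starRingEnd ℂ β * hrow₂

@[simp]
theorem blk11_blockDiag (T₁ : E₁ →L[ℂ] E₁) (T₂ : E₂ →L[ℂ] E₂) (f : E₁) :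
    blk11 (blockDiag T₁ T₂) f = T₁ f :=
  rfl

@[simp]
theorem blk12_blockDiag (T₁ : E₁ →L[ℂ] E₁) (T₂ : E₂ →L[ℂ] E₂) (g : E₂) :
    blk12 (blockDiag T₁ T₂) g = 0 :=
  T₁.map_zero

@[simp]
theorem blk21_blockDiag (T₁ : E₁ →L[ℂ] E₁) (T₂ : E₂ →L[ℂ] E₂) (f : E₁) :
    blk21 (blockDiag T₁ T₂) f = 0 :=
  T₂.map_zero

@[simp]
theorem blk22_blockDiag (T₁ : E₁ →L[ℂ] E₁) (T₂ : E₂ →L[ℂ] E₂) (g : E₂) :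
    blk22 (blockDiag T₁ T₂) g = T₂ g :=
  rfl

variable (Ω : Set ℂ) (A : ℂ → E₁ →ₗ.[ℂ] E₁) (B : ℂ → E₂ →ₗ.[ℂ] E₁)
  (C : ℂ → E₁ →ₗ.[ℂ] E₂) (D : ℂ → E₂ →ₗ.[ℂ] E₂)

theorem qnrPert_zero : qnrPert Ω A B C D 0 = qnr Ω A B C D := by
  simp [qnrPert, qnr, blk11, blk12, blk21, blk22]

theorem fullWPert_zero : fullWPert Ω A B C D 0 = fullW Ω A B C D := by
  simp [fullWPert, fullW]

theorem qnrDiag_zero : qnrDiag Ω A B C D 0 0 = qnr Ω A B C D := by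
  simp [qnrDiag, qnr]

theorem qnrPert_blockDiag (T₁ : E₁ →L[ℂ] E₁) (T₂ : E₂ →L[ℂ] E₂) :
    qnrPert Ω A B C D (blockDiag T₁ T₂) = qnrDiag Ω A B C D T₁ T₂ := by
  simp [qnrPert, qnrDiag]

theorem qnr_subset_fullW : qnr Ω A B C D ⊆ fullW Ω A B C D := by
  rw [← qnrPert_zero, ← fullWPert_zero]
  exact qnrPert_subset_fullWPert Ω A B C D 0

theorem qnrPsi_subset_fullWPsi : qnrPsi Ω A B C D ⊆ fullWPsi Ω A B C D :=
  Set.iInter₂_mono fun _ _ => Set.iUnion₂_mono fun 𝓑 _ => qnrPert_subset_fullWPert Ω A B C D 𝓑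

theorem qnrPsi2_subset_qnrPsi : qnrPsi2 Ω A B C D ⊆ qnrPsi Ω A B C D := by
  intro l hl
  simp only [qnrPsi2, qnrPsi, qnrEps, Set.mem_iInter, Set.mem_iUnion] at hl ⊢
  intro ε hε
  obtain ⟨T₁, T₂, ⟨hT₁, hT₂⟩, hlT⟩ := hl ε hε
  exact ⟨blockDiag T₁ T₂, (norm_blockDiag_le T₁ T₂).trans_lt (max_lt hT₁ hT₂),
    by rwa [qnrPert_blockDiag]⟩

variable {Ω A B C D}

theorem mem_qnrDiag_of_inner_eq_zero (hE₂ : 2 ≤ Module.rank ℂ E₂) {l : ℂ} (hl : l ∈ Ω)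
    (hdense : Dense (((B l).domain : Set E₂) ∩ (D l).domain))
    (hAC : ((A l).domain : Set E₁) ⊆ (C l).domain) (T₁ : E₁ →L[ℂ] E₁) (T₂ : E₂ →L[ℂ] E₂)
    {f : E₁} (hfA : f ∈ (A l).domain) (hf : ‖f‖ = 1) (hf₀ : ⟪f, (A l) ⟨f, hfA⟩ + T₁ f⟫ = 0) :
    l ∈ qnrDiag Ω A B C D T₁ T₂ := by
  obtain ⟨g, hg, hg₁, hg₀⟩ := Submodule.exists_norm_eq_one_mem_inner_eq_zero_of_dense hE₂
    (S := (B l).domain ⊓ (D l).domain) (by rwa [Submodule.coe_inf]) ((C l) ⟨f, hAC hfA⟩)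
  exact ⟨hl, f, g, hfA, hAC hfA, hg.1, hg.2, hf, hg₁, by rw [hf₀, hg₀, zero_mul, mul_zero, sub_zero]⟩

theorem mem_qnrPsi2_of_zero_mem_closure (hE₂ : 2 ≤ Module.rank ℂ E₂) {l : ℂ} (hl : l ∈ Ω)
    (hdense : Dense (((B l).domain : Set E₂) ∩ (D l).domain))
    (hAC : ((A l).domain : Set E₁) ⊆ (C l).domain)
    (h₀ : (0 : ℂ) ∈ closure {z : ℂ | ∃ (f : E₁) (hf : f ∈ (A l).domain),
      ‖f‖ = 1 ∧ z = ⟪f, (A l) ⟨f, hf⟩⟫}) :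
    l ∈ qnrPsi2 Ω A B C D := by
  simp only [qnrPsi2, Set.mem_iInter, Set.mem_iUnion]
  intro ε hε
  obtain ⟨_, ⟨f, hfA, hf, rfl⟩, hdist⟩ := Metric.mem_closure_iff.mp h₀ ε hε
  set a := ⟪f, (A l) ⟨f, hfA⟩⟫
  refine ⟨-a • ContinuousLinearMap.id ℂ E₁, 0, ⟨?_, by simpa using hε⟩,
    mem_qnrDiag_of_inner_eq_zero hE₂ hl hdense hAC _ _ hfA hf ?_⟩
  · calc ‖-a • ContinuousLinearMap.id ℂ E₁‖ ≤ ‖-a‖ * ‖ContinuousLinearMap.id ℂ E₁‖ :=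
          ContinuousLinearMap.opNorm_smul_le _ _
      _ ≤ ‖-a‖ := mul_le_of_le_one_right (norm_nonneg _) ContinuousLinearMap.norm_id_le
      _ < ε := by rwa [norm_neg, ← dist_zero_left]
  · simp [inner_smul_right, inner_self_eq_norm_sq_to_K, hf, a]

end BlockOperator

/-- (i) `W²(L) ⊆ W(L)` and `W²_Ψ(L) ⊆ W_Ψ(L)`.
(ii) If `dim H₂ ≥ 2` and `D₂(λ)` is dense in `H₂` for all `λ ∈ Ω`, then for `λ ∈ Ω` with
`dom A(λ) ⊆ dom C(λ)`: `0 ∈ W(A(λ))` implies `λ ∈ W²(L)`, and `0 ∈ closure W(A(λ))`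
implies `λ ∈ W²_{Ψ,2}(L) ⊆ W²_Ψ(L)`. -/
theorem qnr_subset_numRange_and_diag_numRange_subset_qnr
    (Ω : Set ℂ) (A : ℂ → H₁ →ₗ.[ℂ] H₁) (B : ℂ → H₂ →ₗ.[ℂ] H₁)
    (C : ℂ → H₁ →ₗ.[ℂ] H₂) (D : ℂ → H₂ →ₗ.[ℂ] H₂) :
    (qnr Ω A B C D ⊆ fullW Ω A B C D) ∧
    (qnrPsi Ω A B C D ⊆ fullWPsi Ω A B C D) ∧
    ((2 : Cardinal) ≤ Module.rank ℂ H₂ →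
      (∀ l ∈ Ω, Dense (((B l).domain : Set H₂) ∩ ((D l).domain : Set H₂))) →
      (∀ l ∈ Ω, (((A l).domain : Set H₁) ⊆ ((C l).domain : Set H₁)) →
        (∃ (f : H₁) (hf : f ∈ (A l).domain), ‖f‖ = 1 ∧ ⟪f, (A l) ⟨f, hf⟩⟫ = 0) →
        l ∈ qnr Ω A B C D) ∧
      (∀ l ∈ Ω, (((A l).domain : Set H₁) ⊆ ((C l).domain : Set H₁)) →
        (0 : ℂ) ∈ closure {z : ℂ | ∃ (f : H₁) (hf : f ∈ (A l).domain),
          ‖f‖ = 1 ∧ z = ⟪f, (A l) ⟨f, hf⟩⟫} →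
        l ∈ qnrPsi2 Ω A B C D ∧ qnrPsi2 Ω A B C D ⊆ qnrPsi Ω A B C D)) := by
  refine ⟨qnr_subset_fullW Ω A B C D, qnrPsi_subset_fullWPsi Ω A B C D,
    fun hH₂ hdense => ⟨?_, fun l hl hAC h₀ =>
      ⟨mem_qnrPsi2_of_zero_mem_closure hH₂ hl (hdense l hl) hAC h₀,
        qnrPsi2_subset_qnrPsi Ω A B C D⟩⟩⟩
  rintro l hl hAC ⟨f, hfA, hf, hf₀⟩
  rw [← qnrDiag_zero]
  exact mem_qnrDiag_of_inner_eq_zero hH₂ hl (hdense l hl) hAC 0 0 hfA hf (by simpa using hf₀)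

end
end

section
/- Let L be a 2×2 operator matrix function on Ω in H = H₁ ⊕ H₂ and let λ ∈ Ω satisfy: λ ∈ σ_ap(L); A(λ) and D(λ) are boundedly invertible; dom C(λ) ⊆ dom A(λ) and A(λ) is C(λ)-bounded; dom B(λ) ⊆ dom D(λ) and D(λ) is B(λ)-bounded; B(λ) and C(λ) are boundedly invertible. Then λ ∈ σ_ap(S₁) ∪ σ_ap(S₂). -/
open Filter Topology

noncomputable section

variable {H₁ H₂ : Type*}
  [NormedAddCommGroup H₁] [InnerProductSpace ℂ H₁] [CompleteSpace H₁]
  [NormedAddCommGroup H₂] [InnerProductSpace ℂ H₂] [CompleteSpace H₂]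

/-- `R` is a bounded, everywhere defined inverse of the partially defined operator `S`. -/
def IsBddInv {K₁ K₂ : Type*} [NormedAddCommGroup K₁] [NormedSpace ℂ K₁]
    [NormedAddCommGroup K₂] [NormedSpace ℂ K₂]
    (S : K₁ →ₗ.[ℂ] K₂) (R : K₂ →L[ℂ] K₁) : Prop :=
  (∀ v : S.domain, R (S v) = v) ∧ ∀ h : K₂, ∃ hm : R h ∈ S.domain, S ⟨R h, hm⟩ = h

/-!
Let `(fₙ, gₙ)` be unit vectors with `L (fₙ, gₙ) → 0`. Infinitely often `‖fₙ‖ ≥ 1/2` or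
`‖gₙ‖ ≥ 1/2`; by symmetry (swap `A ↔ D`, `B ↔ C`) take the first case. Correct `fₙ` by
`C⁻¹` of the second component: `wₙ = fₙ - C⁻¹ (C fₙ + D gₙ)` has `C wₙ = -D gₙ`, hence
`D⁻¹ C wₙ = -gₙ ∈ dom B` and `S₁ wₙ = (A fₙ + B gₙ) - A C⁻¹ (C fₙ + D gₙ)`. Both terms tend to
`0`, the second because `A` is `C`-bounded, while `‖wₙ‖ ≥ 1/4` infinitely often since
`C⁻¹` is bounded. Normalizing `wₙ` along those indices gives `0 ∈ σ_ap(S₁)`.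
-/

theorem WithLp.half_le_norm_fst_or_snd {α β : Type*} [SeminormedAddCommGroup α]
    [SeminormedAddCommGroup β] {x : WithLp 2 (α × β)} (hx : ‖x‖ = 1) :
    1 / 2 ≤ ‖x.fst‖ ∨ 1 / 2 ≤ ‖x.snd‖ := by
  have hsq := WithLp.prod_norm_sq_eq_of_L2 x
  rw [hx] at hsq
  by_contra! h
  nlinarith [norm_nonneg x.fst, norm_nonneg x.snd]

namespace LinearPMap

section Schur

variable {R E F : Type*} [Ring R] [AddCommGroup E] [Module R E] [AddCommGroup F] [Module R F]
  (A : E →ₗ.[R] E) (B : F →ₗ.[R] E) (C : E →ₗ.[R] F) (Dinv : F →ₗ[R] F)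

def schurComplementDomain : Submodule R E where
  carrier := {f | ∃ (hA : f ∈ A.domain) (hC : f ∈ C.domain), Dinv (C ⟨f, hC⟩) ∈ B.domain}
  add_mem' := by
    rintro f g ⟨hfA, hfC, hfB⟩ ⟨hgA, hgC, hgB⟩
    refine ⟨add_mem hfA hgA, add_mem hfC hgC, ?_⟩
    have : C ⟨f + g, add_mem hfC hgC⟩ = C ⟨f, hfC⟩ + C ⟨g, hgC⟩ := C.map_add ⟨f, hfC⟩ ⟨g, hgC⟩
    rw [this, Dinv.map_add]
    exact add_mem hfB hgB
  zero_mem' := by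
    refine ⟨zero_mem _, zero_mem _, ?_⟩
    rw [show C ⟨0, zero_mem _⟩ = 0 from C.map_zero, Dinv.map_zero]
    exact zero_mem _
  smul_mem' := by
    rintro c f ⟨hfA, hfC, hfB⟩
    refine ⟨Submodule.smul_mem _ c hfA, Submodule.smul_mem _ c hfC, ?_⟩
    have : C ⟨c • f, Submodule.smul_mem _ c hfC⟩ = c • C ⟨f, hfC⟩ := C.map_smul c ⟨f, hfC⟩
    rw [this, Dinv.map_smul]
    exact Submodule.smul_mem _ c hfB

/-- The first Schur complement `S₁ = A - B D⁻¹ C`, with `Dinv` in the role of `D⁻¹`; the second one,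
`S₂ = D - C A⁻¹ B`, is `schurComplement D C B Ainv`. -/
def schurComplement : E →ₗ.[R] E where
  domain := schurComplementDomain A B C Dinv
  toFun :=
    A.toFun ∘ₗ Submodule.inclusion (p := schurComplementDomain A B C Dinv) (fun _ hf => hf.1) -
      B.toFun ∘ₗ LinearMap.codRestrict B.domain
        (Dinv ∘ₗ C.toFun ∘ₗ Submodule.inclusion (p := schurComplementDomain A B C Dinv)
          (fun _ hf => hf.2.1)) (fun f => f.2.2.2)

theorem exists_schurComplement_apply_sub (D : F →ₗ.[R] F) {f h : E} {g : F}
    (hfA : f ∈ A.domain) (hfC : f ∈ C.domain) (hgB : g ∈ B.domain) (hgD : g ∈ D.domain)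
    (hhA : h ∈ A.domain) (hhC : h ∈ C.domain)
    (hDinv : Dinv (D ⟨g, hgD⟩) = g) (hCh : C ⟨h, hhC⟩ = C ⟨f, hfC⟩ + D ⟨g, hgD⟩) :
    ∃ hw : f - h ∈ (schurComplement A B C Dinv).domain,
      schurComplement A B C Dinv ⟨f - h, hw⟩ = A ⟨f, hfA⟩ + B ⟨g, hgB⟩ - A ⟨h, hhA⟩ := by
  have hwC : f - h ∈ C.domain := sub_mem hfC hhC
  have hCw : C ⟨f - h, hwC⟩ = -D ⟨g, hgD⟩ := by
    rw [show C ⟨f - h, hwC⟩ = C ⟨f, hfC⟩ - C ⟨h, hhC⟩ from C.map_sub ⟨f, hfC⟩ ⟨h, hhC⟩, hCh]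
    abel
  have hDinvCw : Dinv (C ⟨f - h, hwC⟩) = -g := by rw [hCw, Dinv.map_neg, hDinv]
  have hwB : Dinv (C ⟨f - h, hwC⟩) ∈ B.domain := hDinvCw ▸ neg_mem hgB
  refine ⟨⟨sub_mem hfA hhA, hwC, hwB⟩, ?_⟩
  change A ⟨f - h, _⟩ - B ⟨Dinv (C ⟨f - h, hwC⟩), hwB⟩ = _
  rw [show A ⟨f - h, sub_mem hfA hhA⟩ = A ⟨f, hfA⟩ - A ⟨h, hhA⟩ from A.map_sub ⟨f, hfA⟩ ⟨h, hhA⟩,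
    show B ⟨Dinv (C ⟨f - h, hwC⟩), hwB⟩ = -B ⟨g, hgB⟩ from ?_]
  · abel
  · rw [← B.map_neg]
    exact congrArg B (Subtype.ext hDinvCw)

end Schur

section ApproxSpectrum

variable {𝕜 E F G : Type*} [RCLike 𝕜] [NormedAddCommGroup E] [NormedSpace 𝕜 E]
  [NormedAddCommGroup F] [NormedSpace 𝕜 F] [NormedAddCommGroup G] [NormedSpace 𝕜 G]

/-- `0 ∈ σ_ap(S)`. -/
def ZeroMemApproxSpectrum (S : E →ₗ.[𝕜] F) : Prop :=
  ∃ x : ℕ → S.domain, (∀ n, ‖(x n : E)‖ = 1) ∧ Tendsto (fun n => S (x n)) atTop (𝓝 0)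

theorem zeroMemApproxSpectrum_of_frequently_le_norm (S : E →ₗ.[𝕜] F) {w : ℕ → S.domain}
    {δ : ℝ} (hδ : 0 < δ) (hw : ∃ᶠ n in atTop, δ ≤ ‖(w n : E)‖)
    (hSw : Tendsto (fun n => S (w n)) atTop (𝓝 0)) : S.ZeroMemApproxSpectrum := by
  obtain ⟨φ, hφ, hδφ⟩ := extraction_of_frequently_atTop hw
  have hne : ∀ n, (w (φ n) : E) ≠ 0 := fun n => norm_pos_iff.mp (hδ.trans_le (hδφ n))
  refine ⟨fun n => (‖(w (φ n) : E)‖⁻¹ : 𝕜) • w (φ n), fun n => norm_smul_inv_norm (hne n), ?_⟩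
  have hbound : ∀ n, ‖S ((‖(w (φ n) : E)‖⁻¹ : 𝕜) • w (φ n))‖ ≤ δ⁻¹ * ‖S (w (φ n))‖ := by
    intro n
    rw [S.map_smul, norm_smul, norm_inv, RCLike.norm_ofReal, abs_norm]
    gcongr
    exact hδφ n
  refine squeeze_zero_norm hbound ?_
  simpa using ((hSw.comp hφ.tendsto_atTop).norm.const_mul δ⁻¹)

theorem tendsto_zero_of_relBound {ι : Type*} {l : Filter ι} {A : E →ₗ.[𝕜] F} {C : E →ₗ.[𝕜] G}
    (hCA : (C.domain : Set E) ⊆ A.domain) {a b : ℝ}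
    (hAbd : ∀ (f : E) (hf : f ∈ C.domain), ‖A ⟨f, hCA hf⟩‖ ≤ a * ‖f‖ + b * ‖C ⟨f, hf⟩‖)
    {x : ι → E} (hxC : ∀ i, x i ∈ C.domain) (hx : Tendsto x l (𝓝 0))
    (hCx : Tendsto (fun i => C ⟨x i, hxC i⟩) l (𝓝 0)) :
    Tendsto (fun i => A ⟨x i, hCA (hxC i)⟩) l (𝓝 0) := by
  refine squeeze_zero_norm (fun i => hAbd (x i) (hxC i)) ?_
  simpa using (hx.norm.const_mul a).add (hCx.norm.const_mul b)

theorem zeroMemApproxSpectrum_schurComplement {A : E →ₗ.[𝕜] E} {B : F →ₗ.[𝕜] E}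
    {C : E →ₗ.[𝕜] F} {D : F →ₗ.[𝕜] F} {Dinv : F →ₗ[𝕜] F} (hDinv : ∀ v : D.domain, Dinv (D v) = v)
    {RC : F →L[𝕜] E} (hRC : ∀ y, ∃ h : RC y ∈ C.domain, C ⟨RC y, h⟩ = y)
    (hCA : (C.domain : Set E) ⊆ A.domain) {a b : ℝ}
    (hAbd : ∀ (f : E) (hf : f ∈ C.domain), ‖A ⟨f, hCA hf⟩‖ ≤ a * ‖f‖ + b * ‖C ⟨f, hf⟩‖)
    {f : ℕ → E} {g : ℕ → F} (hfA : ∀ n, f n ∈ A.domain) (hfC : ∀ n, f n ∈ C.domain)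
    (hgB : ∀ n, g n ∈ B.domain) (hgD : ∀ n, g n ∈ D.domain)
    (hu : Tendsto (fun n => A ⟨f n, hfA n⟩ + B ⟨g n, hgB n⟩) atTop (𝓝 0))
    (hv : Tendsto (fun n => C ⟨f n, hfC n⟩ + D ⟨g n, hgD n⟩) atTop (𝓝 0))
    {δ : ℝ} (hδ : 0 < δ) (hf : ∃ᶠ n in atTop, δ ≤ ‖f n‖) :
    (schurComplement A B C Dinv).ZeroMemApproxSpectrum := by
  set y := fun n => C ⟨f n, hfC n⟩ + D ⟨g n, hgD n⟩
  choose hyC hCy using fun n => hRC (y n)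
  choose hw hSw using fun n => exists_schurComplement_apply_sub A B C Dinv D (hfA n) (hfC n)
    (hgB n) (hgD n) (hCA (hyC n)) (hyC n) (hDinv _) (hCy n)
  have hRCy : Tendsto (fun n => RC (y n)) atTop (𝓝 0) := by
    simpa [Function.comp_def] using (RC.continuous.tendsto 0).comp hv
  refine zeroMemApproxSpectrum_of_frequently_le_norm _ (w := fun n => ⟨f n - RC (y n), hw n⟩)
    (half_pos hδ) ?_ ?_
  · have hsmall : ∀ᶠ n in atTop, ‖RC (y n)‖ ≤ δ / 2 :=
      hRCy.norm.eventually (ge_mem_nhds (by simpa using half_pos hδ))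
    refine (hf.and_eventually hsmall).mono fun n ⟨hfn, hyn⟩ => ?_
    have := norm_sub_norm_le (f n) (RC (y n))
    change δ / 2 ≤ ‖f n - RC (y n)‖
    linarith
  · simp only [hSw]
    simpa using hu.sub (tendsto_zero_of_relBound hCA hAbd hyC hRCy (by simpa only [hCy] using hv))

end ApproxSpectrum

end LinearPMap

theorem sigmaAp_mem_schur_of_offdiagonally_dominant_general
    (A : ℂ → H₁ →ₗ.[ℂ] H₁) (B : ℂ → H₂ →ₗ.[ℂ] H₁)
    (C : ℂ → H₁ →ₗ.[ℂ] H₂) (D : ℂ → H₂ →ₗ.[ℂ] H₂)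
    (l : ℂ)
    (hap : ∃ (f : ℕ → H₁) (g : ℕ → H₂) (hfA : ∀ n, f n ∈ (A l).domain)
      (hfC : ∀ n, f n ∈ (C l).domain) (hgB : ∀ n, g n ∈ (B l).domain)
      (hgD : ∀ n, g n ∈ (D l).domain),
      (∀ n, ‖(WithLp.equiv 2 (H₁ × H₂)).symm (f n, g n)‖ = 1) ∧
      Tendsto (fun n => (WithLp.equiv 2 (H₁ × H₂)).symm
        ((A l) ⟨f n, hfA n⟩ + (B l) ⟨g n, hgB n⟩,
          (C l) ⟨f n, hfC n⟩ + (D l) ⟨g n, hgD n⟩)) atTop (𝓝 0))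
    (RA : H₁ →L[ℂ] H₁) (hRA : IsBddInv (A l) RA)
    (RD : H₂ →L[ℂ] H₂) (hRD : IsBddInv (D l) RD)
    (hCA : ((C l).domain : Set H₁) ⊆ ((A l).domain : Set H₁))
    (hAbd : ∃ a b : ℝ, 0 ≤ a ∧ 0 ≤ b ∧ ∀ (f : H₁) (hf : f ∈ (C l).domain),
      ‖(A l) ⟨f, hCA hf⟩‖ ≤ a * ‖f‖ + b * ‖(C l) ⟨f, hf⟩‖)
    (hBD : ((B l).domain : Set H₂) ⊆ ((D l).domain : Set H₂))
    (hDbd : ∃ a b : ℝ, 0 ≤ a ∧ 0 ≤ b ∧ ∀ (g : H₂) (hg : g ∈ (B l).domain),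
      ‖(D l) ⟨g, hBD hg⟩‖ ≤ a * ‖g‖ + b * ‖(B l) ⟨g, hg⟩‖)
    (RB : H₁ →L[ℂ] H₂) (hRB : IsBddInv (B l) RB)
    (RC : H₂ →L[ℂ] H₁) (hRC : IsBddInv (C l) RC) :
    (∃ (f : ℕ → H₁) (hfA : ∀ n, f n ∈ (A l).domain) (hfC : ∀ n, f n ∈ (C l).domain)
      (hB : ∀ n, RD ((C l) ⟨f n, hfC n⟩) ∈ (B l).domain),
      (∀ n, ‖f n‖ = 1) ∧
      Tendsto (fun n => (A l) ⟨f n, hfA n⟩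
        - (B l) ⟨RD ((C l) ⟨f n, hfC n⟩), hB n⟩) atTop (𝓝 0)) ∨
    (∃ (g : ℕ → H₂) (hgB : ∀ n, g n ∈ (B l).domain) (hgD : ∀ n, g n ∈ (D l).domain)
      (hC : ∀ n, RA ((B l) ⟨g n, hgB n⟩) ∈ (C l).domain),
      (∀ n, ‖g n‖ = 1) ∧
      Tendsto (fun n => (D l) ⟨g n, hgD n⟩
        - (C l) ⟨RA ((B l) ⟨g n, hgB n⟩), hC n⟩) atTop (𝓝 0)) := by
  obtain ⟨f, g, hfA, hfC, hgB, hgD, hnorm, hL⟩ := hap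
  obtain ⟨a₁, b₁, -, -, hAbd⟩ := hAbd
  obtain ⟨a₂, b₂, -, -, hDbd⟩ := hDbd
  have hL' := ((WithLp.prodContinuousLinearEquiv 2 ℂ H₁ H₂).continuous.tendsto 0).comp hL
  have hu : Tendsto (fun n => A l ⟨f n, hfA n⟩ + B l ⟨g n, hgB n⟩) atTop (𝓝 0) := hL'.fst_nhds
  have hv : Tendsto (fun n => C l ⟨f n, hfC n⟩ + D l ⟨g n, hgD n⟩) atTop (𝓝 0) := hL'.snd_nhds
  have hsplit : (∃ᶠ n in atTop, 1 / 2 ≤ ‖f n‖) ∨ ∃ᶠ n in atTop, 1 / 2 ≤ ‖g n‖ :=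
    frequently_or_distrib.mp <|
      Frequently.of_forall fun n => WithLp.half_le_norm_fst_or_snd (hnorm n)
  rcases hsplit with hf | hg
  · obtain ⟨x, hx, hSx⟩ := LinearPMap.zeroMemApproxSpectrum_schurComplement
      (Dinv := (RD : H₂ →ₗ[ℂ] H₂)) hRD.1 hRC.2 hCA hAbd hfA hfC hgB hgD hu hv one_half_pos hf
    exact Or.inl ⟨fun n => x n, fun n => (x n).2.1, fun n => (x n).2.2.1, fun n => (x n).2.2.2,
      hx, hSx⟩
  · obtain ⟨x, hx, hSx⟩ := LinearPMap.zeroMemApproxSpectrum_schurComplement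
      (Dinv := (RA : H₁ →ₗ[ℂ] H₁)) hRA.1 hRB.2 hBD hDbd hgD hgB hfC hfA
      (by simpa only [add_comm] using hv) (by simpa only [add_comm] using hu) one_half_pos hg
    exact Or.inr ⟨fun n => x n, fun n => (x n).2.2.1, fun n => (x n).2.1, fun n => (x n).2.2.2,
      hx, hSx⟩

/-- If `λ ∈ σ_ap(L)`, `A(λ)` and `D(λ)` are boundedly invertible, `A(λ)` is
`C(λ)`-bounded, `D(λ)` is `B(λ)`-bounded, and `B(λ)`, `C(λ)` are boundedly invertible,
then `λ` lies in the approximate point spectrum of one of the Schur complements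
`S₁(λ) = A − B D⁻¹ C` or `S₂(λ) = D − C A⁻¹ B`. -/
theorem sigmaAp_mem_schur_of_offdiagonally_dominant
    (Ω : Set ℂ) (A : ℂ → H₁ →ₗ.[ℂ] H₁) (B : ℂ → H₂ →ₗ.[ℂ] H₁)
    (C : ℂ → H₁ →ₗ.[ℂ] H₂) (D : ℂ → H₂ →ₗ.[ℂ] H₂)
    (l : ℂ) (hl : l ∈ Ω)
    (hap : ∃ (f : ℕ → H₁) (g : ℕ → H₂) (hfA : ∀ n, f n ∈ (A l).domain)
      (hfC : ∀ n, f n ∈ (C l).domain) (hgB : ∀ n, g n ∈ (B l).domain)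
      (hgD : ∀ n, g n ∈ (D l).domain),
      (∀ n, ‖(WithLp.equiv 2 (H₁ × H₂)).symm (f n, g n)‖ = 1) ∧
      Tendsto (fun n => (WithLp.equiv 2 (H₁ × H₂)).symm
        ((A l) ⟨f n, hfA n⟩ + (B l) ⟨g n, hgB n⟩,
          (C l) ⟨f n, hfC n⟩ + (D l) ⟨g n, hgD n⟩)) atTop (𝓝 0))
    (RA : H₁ →L[ℂ] H₁) (hRA : IsBddInv (A l) RA)
    (RD : H₂ →L[ℂ] H₂) (hRD : IsBddInv (D l) RD)
    (hCA : ((C l).domain : Set H₁) ⊆ ((A l).domain : Set H₁))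
    (hAbd : ∃ a b : ℝ, 0 ≤ a ∧ 0 ≤ b ∧ ∀ (f : H₁) (hf : f ∈ (C l).domain),
      ‖(A l) ⟨f, hCA hf⟩‖ ≤ a * ‖f‖ + b * ‖(C l) ⟨f, hf⟩‖)
    (hBD : ((B l).domain : Set H₂) ⊆ ((D l).domain : Set H₂))
    (hDbd : ∃ a b : ℝ, 0 ≤ a ∧ 0 ≤ b ∧ ∀ (g : H₂) (hg : g ∈ (B l).domain),
      ‖(D l) ⟨g, hBD hg⟩‖ ≤ a * ‖g‖ + b * ‖(B l) ⟨g, hg⟩‖)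
    (RB : H₁ →L[ℂ] H₂) (hRB : IsBddInv (B l) RB)
    (RC : H₂ →L[ℂ] H₁) (hRC : IsBddInv (C l) RC) :
    (∃ (f : ℕ → H₁) (hfA : ∀ n, f n ∈ (A l).domain) (hfC : ∀ n, f n ∈ (C l).domain)
      (hB : ∀ n, RD ((C l) ⟨f n, hfC n⟩) ∈ (B l).domain),
      (∀ n, ‖f n‖ = 1) ∧
      Tendsto (fun n => (A l) ⟨f n, hfA n⟩
        - (B l) ⟨RD ((C l) ⟨f n, hfC n⟩), hB n⟩) atTop (𝓝 0)) ∨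
    (∃ (g : ℕ → H₂) (hgB : ∀ n, g n ∈ (B l).domain) (hgD : ∀ n, g n ∈ (D l).domain)
      (hC : ∀ n, RA ((B l) ⟨g n, hgB n⟩) ∈ (C l).domain),
      (∀ n, ‖g n‖ = 1) ∧
      Tendsto (fun n => (D l) ⟨g n, hgD n⟩
        - (C l) ⟨RA ((B l) ⟨g n, hgB n⟩), hC n⟩) atTop (𝓝 0)) :=
  sigmaAp_mem_schur_of_offdiagonally_dominant_general A B C D l hap RA hRA RD hRD hCA hAbd hBD hDbd
    RB hRB RC hRC

end
end
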